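/- arXiv:2007.00421 — 4 statements merged into one kernel-verified Lean document; each statement's English description precedes it below -/
import Mathlib

section
/- Define h(t) = (1/e) * (1 + (t-1)/p)^p for t > 0, where p ≥ 1 is a fixed real. Then for every t ∈ [1,3], h(t) - t ≤ max{1/e - 1, (1/e)*(1 + 2/p)^p - 3}, and this maximum is strictly less than e - 3 for every p ≥ 1. -/
/-!
`t ↦ h(t) - t` is convex, so on `[1, 3]` it is bounded by its values at the endpoints, which are
the two terms of the maximum. Both lie below `e - 3`: the first because `e > 2 + 1/e`, the second
because `(1 + 2/p)^p < e²`, which is `1 + x < eˣ` at `x = 2/p` raised to the power `p`.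
-/

open Real Set

theorem convexOn_one_add_sub_one_div_rpow {p : ℝ} (hp : 1 ≤ p) :
    ConvexOn ℝ (Ici 1) fun t : ℝ => (1 + (t - 1) / p) ^ p := by
  have hp0 : 0 < p := one_pos.trans_le hp
  let g : ℝ →ᵃ[ℝ] ℝ := AffineMap.lineMap (1 - 1 / p) 1
  have hg : ⇑g = fun t => 1 + (t - 1) / p := funext fun t => by
    simp [g, AffineMap.lineMap_apply]; ring
  have hs : Ici 1 ⊆ g ⁻¹' Ici 0 := fun t ht => by
    simp only [mem_preimage, hg, mem_Ici] at ht ⊢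
    have : 0 ≤ (t - 1) / p := div_nonneg (by linarith) hp0.le
    linarith
  have h := ((convexOn_rpow hp).comp_affineMap g).subset hs (convex_Ici 1)
  rwa [hg] at h

theorem one_add_div_rpow_lt_exp {x p : ℝ} (hx : 0 < x) (hp : 0 < p) :
    (1 + x / p) ^ p < exp x :=
  calc (1 + x / p) ^ p < exp (x / p) ^ p := by
        gcongr
        linarith [add_one_lt_exp (div_pos hx hp).ne']
    _ = exp x := by rw [← exp_mul, div_mul_cancel₀ _ hp.ne']

theorem h_minus_t_bound (p : ℝ) (hp : 1 ≤ p) :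
    (∀ t ∈ Set.Icc (1 : ℝ) 3,
      (1 / Real.exp 1) * (1 + (t - 1) / p) ^ p - t ≤
        max (1 / Real.exp 1 - 1) ((1 / Real.exp 1) * (1 + 2 / p) ^ p - 3)) ∧
    max (1 / Real.exp 1 - 1) ((1 / Real.exp 1) * (1 + 2 / p) ^ p - 3) < Real.exp 1 - 3 := by
  have hp0 : 0 < p := one_pos.trans_le hp
  have hconv : ConvexOn ℝ (Ici 1) fun t => (1 / exp 1) * (1 + (t - 1) / p) ^ p - t :=
    ((convexOn_one_add_sub_one_div_rpow hp).smul (by positivity)).sub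
      (concaveOn_id (convex_Ici 1))
  refine ⟨fun t ht => ?_, max_lt ?_ ?_⟩
  · have h := hconv.le_max_of_mem_Icc (x := 1) (y := 3) self_mem_Ici (by norm_num) ht
    norm_num at h ⊢
    exact h
  · have he : 1 / exp 1 < 1 / 2 := one_div_lt_one_div_of_lt two_pos (by linarith [exp_one_gt_d9])
    linarith [exp_one_gt_d9]
  · have hpow : (1 / exp 1) * (1 + 2 / p) ^ p < exp 1 :=
      calc (1 / exp 1) * (1 + 2 / p) ^ p < (1 / exp 1) * exp 2 := by
            gcongr
            exact one_add_div_rpow_lt_exp two_pos hp0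
        _ = exp 1 := by
            rw [show (2 : ℝ) = 1 + 1 by norm_num, exp_add]
            field_simp
    linarith
end

section
/- Let p ≥ 1 be real, let e be Euler's number, and set a₀ = 2ℓ/(eℓ - 2) for a real ℓ ≥ 1. Then 1 < 2/(e-2) implies a₀ ≤ 2/(e-2) < 3 whenever a₀ > 1, and the recursively defined sequence a_{n+1} = (1/e)(1 + (a_n - 1)/p)^p satisfies: there exists n₁ ≥ 2 with a_{n₁} < 1. -/
/-!
For `t ≥ 1` the bound `(1 + x/p)^p ≤ eˣ` gives `stepMap p t ≤ e^(t-2)`, and convexity of `exp` on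
`[-1, 1]` gives `e^(t-2) ≤ t - (3 - e)` on `[1, 3]`. So while `aₙ ∈ [1, 3]` every step lowers the
sequence by at least `3 - e > 0`, and since `a₀ < 3` it falls below `1` after finitely many steps.
Once in `[0, 1)` it stays there, because `stepMap p t ≤ e^(t-2) < 1` for `t < 2`.
-/

open Real Set Filter

theorem one_add_div_rpow_le_exp {p x : ℝ} (hp : 0 < p) (hx : -p ≤ x) :
    (1 + x / p) ^ p ≤ exp x := by
  have hbase : -1 ≤ x / p := by rw [le_div_iff₀ hp]; linarith
  calc (1 + x / p) ^ p ≤ exp (x / p) ^ p := by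
        gcongr
        · linarith
        · linarith [add_one_le_exp (x / p)]
    _ = exp x := by rw [← exp_mul, div_mul_cancel₀ _ hp.ne']

theorem exp_sub_two_le_sub_three_sub_exp_one {t : ℝ} (h1 : 1 ≤ t) (h3 : t ≤ 3) :
    exp (t - 2) ≤ t - (3 - exp 1) := by
  have hchord := convexOn_exp.2 (mem_univ (-1)) (mem_univ 1)
    (show 0 ≤ (3 - t) / 2 by linarith) (show 0 ≤ (t - 1) / 2 by linarith) (by ring)
  rw [smul_eq_mul, smul_eq_mul, smul_eq_mul, smul_eq_mul, exp_neg] at hchord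
  have hinv : (exp 1)⁻¹ < 1 / 2 := by
    rw [inv_lt_comm₀ (exp_pos 1) (by norm_num)]; linarith [exp_one_gt_two]
  -- the chord lies below the line of slope `1` through `(3, e)` because its slope exceeds `1`
  have hgap : 0 ≤ (3 - t) * (exp 1 - 2 - (exp 1)⁻¹) :=
    mul_nonneg (by linarith) (by linarith [exp_one_gt_d9])
  calc exp (t - 2) = exp ((3 - t) / 2 * -1 + (t - 1) / 2 * 1) := by ring_nf
    _ ≤ (3 - t) / 2 * (exp 1)⁻¹ + (t - 1) / 2 * exp 1 := hchord
    _ ≤ t - (3 - exp 1) := by linear_combination hgap / 2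

theorem two_mul_div_mul_sub_two_le {c ℓ : ℝ} (hc : 2 < c) (hℓ : 1 ≤ ℓ) :
    2 * ℓ / (c * ℓ - 2) ≤ 2 / (c - 2) := by
  rw [div_le_div_iff₀ (by nlinarith) (by linarith)]
  nlinarith

theorem two_div_exp_one_sub_two_lt_three : 2 / (exp 1 - 2) < 3 := by
  rw [div_lt_iff₀ (by linarith [exp_one_gt_two])]
  linarith [exp_one_gt_d9]

theorem eventually_lt_of_descent {f : ℝ → ℝ} {u : ℕ → ℝ} {lo b B c : ℝ} (hc : 0 < c)
    (hf_lo : ∀ t, lo ≤ t → lo ≤ f t) (hf_lt : ∀ t, lo ≤ t → t < b → f t < b)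
    (hf_desc : ∀ t, b ≤ t → t ≤ B → f t ≤ t - c)
    (hu : ∀ n, u (n + 1) = f (u n)) (hu_lo : lo ≤ u 0) (hu_B : u 0 ≤ B) :
    ∀ᶠ n in atTop, u n < b := by
  have hinv : ∀ n : ℕ, lo ≤ u n ∧ (u n < b ∨ u n ≤ u 0 - n * c) := by
    intro n
    induction n with
    | zero => exact ⟨hu_lo, Or.inr (by simp)⟩
    | succ n ih =>
      obtain ⟨hlo, hprev⟩ := ih
      rw [hu n]
      refine ⟨hf_lo _ hlo, ?_⟩
      by_cases hb : u n < b
      · exact Or.inl (hf_lt _ hlo hb)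
      have hdrop := hprev.resolve_left hb
      have hnc : 0 ≤ (n : ℝ) * c := by positivity
      have := hf_desc (u n) (not_lt.1 hb) (by linarith)
      exact Or.inr (by push_cast; linarith)
  obtain ⟨N, hN⟩ := exists_nat_gt ((u 0 - b) / c)
  filter_upwards [eventually_ge_atTop N] with n hn
  obtain hbelow | hdrop := (hinv n).2
  · exact hbelow
  have : u 0 - b < n * c := (div_lt_iff₀ hc).1 (hN.trans_le (by exact_mod_cast hn))
  linarith

noncomputable def stepMap (p t : ℝ) : ℝ := 1 / exp 1 * (1 + (t - 1) / p) ^ p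

section stepMap

variable {p t : ℝ}

theorem stepMap_nonneg (hp : 0 < p) (ht : 1 - p ≤ t) : 0 ≤ stepMap p t := by
  have hbase : -1 ≤ (t - 1) / p := by rw [le_div_iff₀ hp]; linarith
  unfold stepMap
  have := rpow_nonneg (show 0 ≤ 1 + (t - 1) / p by linarith) p
  positivity

theorem stepMap_le_exp_sub_two (hp : 0 < p) (ht : 1 - p ≤ t) : stepMap p t ≤ exp (t - 2) :=
  calc stepMap p t ≤ 1 / exp 1 * exp (t - 1) := by
        unfold stepMap
        gcongr
        exact one_add_div_rpow_le_exp hp (by linarith)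
    _ = exp (t - 2) := by rw [one_div, ← exp_neg, ← exp_add]; ring_nf

theorem stepMap_lt_one (hp : 0 < p) (ht : 1 - p ≤ t) (ht2 : t < 2) : stepMap p t < 1 :=
  (stepMap_le_exp_sub_two hp ht).trans_lt (exp_lt_one_iff.2 (by linarith))

theorem stepMap_le_sub (hp : 0 < p) (h1 : 1 ≤ t) (h3 : t ≤ 3) :
    stepMap p t ≤ t - (3 - exp 1) :=
  (stepMap_le_exp_sub_two hp (by linarith)).trans (exp_sub_two_le_sub_three_sub_exp_one h1 h3)

end stepMap

theorem iteration_drops_below_one (p ℓ : ℝ) (hp : 1 ≤ p) (hℓ : 1 ≤ ℓ)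
    (a : ℕ → ℝ) (ha0 : a 0 = 2 * ℓ / (Real.exp 1 * ℓ - 2))
    (hrec : ∀ n : ℕ, a (n + 1) = (1 / Real.exp 1) * (1 + (a n - 1) / p) ^ p)
    (ha0_gt : 1 < a 0) :
    (a 0 ≤ 2 / (Real.exp 1 - 2) ∧ 2 / (Real.exp 1 - 2) < 3) ∧
    ∃ n₁ : ℕ, 2 ≤ n₁ ∧ a n₁ < 1 := by
  have hp0 : 0 < p := by linarith
  have ha0_le : a 0 ≤ 2 / (exp 1 - 2) := ha0 ▸ two_mul_div_mul_sub_two_le exp_one_gt_two hℓ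
  refine ⟨⟨ha0_le, two_div_exp_one_sub_two_lt_three⟩, ?_⟩
  have hbelow : ∀ᶠ n in atTop, a n < 1 :=
    eventually_lt_of_descent (f := stepMap p) (lo := 0) (B := 3) (sub_pos.2 exp_one_lt_three)
      (fun t ht => stepMap_nonneg hp0 (by linarith))
      (fun t ht ht1 => stepMap_lt_one hp0 (by linarith) (by linarith))
      (fun t ht1 ht3 => stepMap_le_sub hp0 ht1 ht3) hrec (by linarith)
      (ha0_le.trans two_div_exp_one_sub_two_lt_three.le)
  obtain ⟨n, hn, hn2⟩ := (hbelow.and (eventually_ge_atTop 2)).exists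
  exact ⟨n, hn2, hn⟩
end

section
/- For every real t ≥ 1 and every real α ≤ 1/2 with α ≥ 0, the function f(t,α) = (Γ(t+2))^{1/(t+1)} / e * (α + (1/e)*((t+1)/(2t))*(1-α))^{t/(t+1)} satisfies f(t,α) ≤ f(t,1/2) ≤ t/2 ≤ t(1-α). -/
open Real

noncomputable def fTA (t α : ℝ) : ℝ :=
  (Real.Gamma (t + 2)) ^ (1 / (t + 1)) / Real.exp 1 *
    (α + (1 / Real.exp 1) * ((t + 1) / (2 * t)) * (1 - α)) ^ (t / (t + 1))

/-! Raising to the power `t + 1`, the middle inequality becomes `Γ(t+2) B^t ≤ (t e / 2)^(t+1)`,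
where `B ≤ 3/4` is the base of `fTA t (1/2)`. The real analogue `Γ(x+1) ≤ ((x+2)/2)^x` of
`n! ≤ ((n+2)/2)^n` follows by induction from `Γ ≤ 1` on `[1, 2]` (log-convexity) and
`Γ(x+1) = x Γ(x)`; it gives `Γ(t+2) ≤ 2t ((t+1)/2)^t`, after which only `e² ≥ 6` is needed.
The outer inequalities are monotonicity in `α`. -/

open Set

namespace Real

theorem Gamma_le_one_of_mem_Icc {x : ℝ} (hx : x ∈ Icc 1 2) : Gamma x ≤ 1 := by
  have hlog := convexOn_log_Gamma.le_on_segment (mem_Ioi.2 one_pos) (mem_Ioi.2 two_pos)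
    (by rwa [segment_eq_Icc one_le_two])
  simp only [Function.comp_apply, Gamma_one, Gamma_two, log_one, max_self] at hlog
  exact (log_nonpos_iff (Gamma_pos_of_pos (by linarith [hx.1])).le).1 hlog

theorem two_mul_add_one_div_le_rpow {x : ℝ} (hx : 0 ≤ x) :
    2 * (x + 1) / (x + 3) ≤ ((x + 3) / (x + 2)) ^ x := by
  have hlog : x / (x + 3) ≤ x * log ((x + 3) / (x + 2)) := by
    have := one_sub_inv_le_log_of_pos (x := (x + 3) / (x + 2)) (by positivity)
    rw [inv_div, show 1 - (x + 2) / (x + 3) = 1 / (x + 3) by field_simp; ring] at this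
    calc x / (x + 3) = x * (1 / (x + 3)) := by ring
      _ ≤ _ := by gcongr
  calc 2 * (x + 1) / (x + 3) ≤ x / (x + 3) + 1 := by
        rw [div_add_one (by positivity)]; gcongr; linarith
    _ ≤ x * log ((x + 3) / (x + 2)) + 1 := by gcongr
    _ ≤ exp (x * log ((x + 3) / (x + 2))) := add_one_le_exp _
    _ = ((x + 3) / (x + 2)) ^ x := by rw [rpow_def_of_pos (by positivity), mul_comm]

theorem add_one_mul_rpow_le_rpow_add_one {x : ℝ} (hx : 0 ≤ x) :
    (x + 1) * ((x + 2) / 2) ^ x ≤ ((x + 3) / 2) ^ (x + 1) := by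
  have hsplit : (x + 3) / 2 = (x + 2) / 2 * ((x + 3) / (x + 2)) := by field_simp
  calc (x + 1) * ((x + 2) / 2) ^ x
      = (x + 3) / 2 * (2 * (x + 1) / (x + 3)) * ((x + 2) / 2) ^ x := by field_simp
    _ ≤ (x + 3) / 2 * ((x + 3) / (x + 2)) ^ x * ((x + 2) / 2) ^ x := by
        gcongr; exact two_mul_add_one_div_le_rpow hx
    _ = ((x + 3) / 2) ^ (x + 1) := by
        rw [rpow_add_one (by positivity), hsplit, mul_rpow (by positivity) (by positivity)]; ring

theorem Gamma_add_one_le_rpow {x : ℝ} (hx : 0 ≤ x) : Gamma (x + 1) ≤ ((x + 2) / 2) ^ x := by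
  have base : ∀ y ∈ Icc (0 : ℝ) 1, Gamma (y + 1) ≤ ((y + 2) / 2) ^ y := fun y hy =>
    (Gamma_le_one_of_mem_Icc ⟨by linarith [hy.1], by linarith [hy.2]⟩).trans
      (one_le_rpow (by linarith [hy.1]) hy.1)
  suffices h : ∀ n : ℕ, ∀ y ∈ Icc (0 : ℝ) (n + 1), Gamma (y + 1) ≤ ((y + 2) / 2) ^ y by
    obtain ⟨n, hn⟩ := exists_nat_ge x
    exact h n x ⟨hx, by linarith⟩
  intro n
  induction n with
  | zero => simpa using base
  | succ n ih =>
    intro y ⟨hy0, hy⟩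
    rcases le_or_gt y 1 with hy1 | hy1
    · exact base y ⟨hy0, hy1⟩
    · have hprev := ih (y - 1) ⟨by linarith, by push_cast at hy; linarith⟩
      rw [sub_add_cancel] at hprev
      have hstep := add_one_mul_rpow_le_rpow_add_one (x := y - 1) (by linarith)
      rw [Gamma_add_one (by linarith : y ≠ 0)]
      calc y * Gamma y ≤ y * ((y - 1 + 2) / 2) ^ (y - 1) := by gcongr
        _ ≤ ((y - 1 + 3) / 2) ^ (y - 1 + 1) := by simpa using hstep
        _ = ((y + 2) / 2) ^ y := by ring_nf

theorem Gamma_add_two_le {t : ℝ} (ht : 1 ≤ t) : Gamma (t + 2) ≤ 2 * t * ((t + 1) / 2) ^ t := by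
  have hΓ := Gamma_add_one_le_rpow (x := t - 1) (by linarith)
  rw [sub_add_cancel, show t - 1 + 2 = t + 1 by ring, rpow_sub_one (by positivity)] at hΓ
  rw [show t + 2 = t + 1 + 1 by ring, Gamma_add_one (by positivity), Gamma_add_one (by positivity)]
  calc (t + 1) * (t * Gamma t) ≤ (t + 1) * (t * (((t + 1) / 2) ^ t / ((t + 1) / 2))) := by
        gcongr
    _ = 2 * t * ((t + 1) / 2) ^ t := by field_simp

theorem rpow_one_div_mul_rpow_div_le {a b y s : ℝ} (ha : 0 ≤ a) (hb : 0 ≤ b) (hy : 0 ≤ y)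
    (hs : 0 ≤ s) (h : a * b ^ s ≤ y ^ (s + 1)) : a ^ (1 / (s + 1)) * b ^ (s / (s + 1)) ≤ y := by
  rw [div_eq_mul_one_div s, rpow_mul hb, ← mul_rpow ha (by positivity), one_div,
    rpow_inv_le_iff_of_pos (by positivity) hy (by positivity)]
  exact h

end Real

theorem fTA_coeff_mem_Icc {t : ℝ} (ht : 1 ≤ t) :
    1 / exp 1 * ((t + 1) / (2 * t)) ∈ Icc 0 (1 / 2) := by
  have he : 2 ≤ exp 1 := by linarith [add_one_le_exp 1]
  have hfrac : (t + 1) / (2 * t) ≤ 1 := by rw [div_le_one (by positivity)]; linarith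
  refine ⟨by positivity, ?_⟩
  calc 1 / exp 1 * ((t + 1) / (2 * t)) ≤ 1 / 2 * 1 := by gcongr
    _ = 1 / 2 := mul_one _

theorem fTA_le_fTA {t α β : ℝ} (ht : 1 ≤ t) (hα : 0 ≤ α) (hαβ : α ≤ β) :
    fTA t α ≤ fTA t β := by
  obtain ⟨hc0, hc⟩ := fTA_coeff_mem_Icc ht
  unfold fTA
  gcongr _ * ?_ ^ _
  · nlinarith
  · nlinarith

theorem fTA_half_le {t : ℝ} (ht : 1 ≤ t) : fTA t (1 / 2) ≤ t / 2 := by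
  obtain ⟨hc0, hc⟩ := fTA_coeff_mem_Icc ht
  set B := 1 / 2 + 1 / exp 1 * ((t + 1) / (2 * t)) * (1 - 1 / 2) with hB
  have hB0 : 0 ≤ B := by positivity
  have hB1 : B ≤ 3 / 4 := by linarith
  have he : 6 ≤ exp 1 ^ 2 := by nlinarith [exp_one_gt_d9]
  have key : Gamma (t + 2) * B ^ t ≤ (t * exp 1 / 2) ^ (t + 1) := by
    calc Gamma (t + 2) * B ^ t ≤ 2 * t * ((t + 1) / 2) ^ t * B ^ t := by
          gcongr; exact Gamma_add_two_le ht
      _ = 2 * t * ((t + 1) / 2 * B) ^ t := by rw [mul_rpow (by positivity) hB0]; ring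
      _ ≤ 2 * t * (3 * t / 4) ^ t := by gcongr; nlinarith
      _ ≤ t * exp 1 / 2 * (2 * exp 1 / 3) * (3 * t / 4) ^ t :=
          mul_le_mul_of_nonneg_right (by nlinarith) (by positivity)
      _ ≤ t * exp 1 / 2 * (2 * exp 1 / 3) ^ t * (3 * t / 4) ^ t := by
          gcongr; exact self_le_rpow_of_one_le (by linarith [exp_one_gt_d9]) ht
      _ = (t * exp 1 / 2) ^ (t + 1) := by
          rw [rpow_add_one (by positivity), mul_assoc, ← mul_rpow (by positivity) (by positivity)]
          ring_nf
  have hroot := rpow_one_div_mul_rpow_div_le (Gamma_pos_of_pos (by positivity)).le hB0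
    (by positivity) (by positivity) key
  change Gamma (t + 2) ^ (1 / (t + 1)) / exp 1 * B ^ (t / (t + 1)) ≤ t / 2
  rw [div_mul_eq_mul_div, div_le_iff₀ (exp_pos 1)]
  linarith

theorem fTA_bounds (t α : ℝ) (ht : 1 ≤ t) (hα0 : 0 ≤ α) (hα : α ≤ 1 / 2) :
    fTA t α ≤ fTA t (1 / 2) ∧ fTA t (1 / 2) ≤ t / 2 ∧ t / 2 ≤ t * (1 - α) :=
  ⟨fTA_le_fTA ht hα0 hα, fTA_half_le ht, by nlinarith⟩
end

section
/- For every real t ≥ 1, the function f₁(t) = 2*(Γ(t+2))^{1/(t+1)} * (2t/(e(t+1))) * (2/e)^{t/(t+1)} satisfies f₁(t) < t. -/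
/-!
Raised to the power `t + 1`, the claim reads
`(4 / (e (t + 1))) ^ (t + 1) Γ(t + 2) (2 / e) ^ t < 1`.
Log-convexity of `Γ` between `3` and `4`, together with `(x / 2) ^ x ≥ e ^ (x - 2)`, gives
`Γ(x + 1) ≤ 9/4 (x / 2) ^ x` on `[2, 3]`; since `(1 + 1/x) ^ x ≥ 2` (Bernoulli), the recursion
`Γ(x + 2) = (x + 1) Γ(x + 1)` carries this bound to all `x ≥ 2`. With `x = t + 1` the left-hand
side is then at most `9/4 (2 / e) ^ (2t + 1) ≤ 18 / e ^ 3 < 1`.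
-/

open Real Set

namespace Real

theorem Gamma_add_le_rpow_mul_Gamma {s θ : ℝ} (hs : 0 < s) (hθ₀ : 0 ≤ θ) (hθ₁ : θ ≤ 1) :
    Gamma (s + θ) ≤ s ^ θ * Gamma s := by
  rcases hθ₀.eq_or_lt with rfl | hθ₀
  · simp
  rcases hθ₁.eq_or_lt with rfl | hθ₁
  · rw [rpow_one, Gamma_add_one hs.ne']
  have hΓ := Gamma_pos_of_pos hs
  calc Gamma (s + θ) = Gamma ((1 - θ) * s + θ * (s + 1)) := by ring_nf
    _ ≤ Gamma s ^ (1 - θ) * Gamma (s + 1) ^ θ :=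
      Gamma_mul_add_mul_le_rpow_Gamma_mul_rpow_Gamma hs (by linarith) (by linarith) hθ₀ (by ring)
    _ = s ^ θ * Gamma s := by
      rw [Gamma_add_one hs.ne', mul_rpow hs.le hΓ.le, mul_left_comm, ← rpow_add hΓ]
      simp

theorem exp_sub_le_div_rpow_self {a x : ℝ} (ha : 0 < a) (hx : 0 < x) :
    exp (x - a) ≤ (x / a) ^ x := by
  have hxa : 0 < x / a := by positivity
  rw [rpow_def_of_pos hxa, exp_le_exp]
  have := one_sub_inv_le_log_of_pos hxa
  rw [inv_div] at this
  calc x - a = (1 - a / x) * x := by field_simp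
    _ ≤ log (x / a) * x := by gcongr

theorem add_one_mul_half_rpow_self_le {x : ℝ} (hx : 1 ≤ x) :
    (x + 1) * (x / 2) ^ x ≤ ((x + 1) / 2) ^ (x + 1) := by
  have hx₀ : 0 < x := by linarith
  have hbern : 2 ≤ (1 + x⁻¹) ^ x := by
    have := one_add_mul_self_le_rpow_one_add (s := x⁻¹) (by linarith [inv_pos.2 hx₀]) hx
    rwa [mul_inv_cancel₀ hx₀.ne', one_add_one_eq_two] at this
  calc (x + 1) * (x / 2) ^ x = (x + 1) / 2 * (2 * (x / 2) ^ x) := by ring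
    _ ≤ (x + 1) / 2 * ((1 + x⁻¹) ^ x * (x / 2) ^ x) := by gcongr
    _ = ((x + 1) / 2) ^ (x + 1) := by
      rw [← mul_rpow (by positivity) (by positivity), rpow_add_one (by positivity), mul_comm]
      congr 2
      field_simp

theorem Gamma_add_one_le_of_forall_Icc {g : ℝ → ℝ} {a : ℝ} (ha : -1 < a)
    (hbase : ∀ x ∈ Icc a (a + 1), Gamma (x + 1) ≤ g x)
    (hstep : ∀ x, a ≤ x → (x + 1) * g x ≤ g (x + 1)) {x : ℝ} (hx : a ≤ x) :
    Gamma (x + 1) ≤ g x := by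
  suffices ∀ n : ℕ, ∀ x ∈ Icc a (a + 1 + n), Gamma (x + 1) ≤ g x from
    this ⌈x - a⌉₊ x ⟨hx, by linarith [Nat.le_ceil (x - a)]⟩
  intro n
  induction n with
  | zero => simpa using hbase
  | succ n ih =>
    rintro x ⟨hax, hxn⟩
    by_cases hle : x ≤ a + 1 + n
    · exact ih x ⟨hax, hle⟩
    have hx' : x - 1 ∈ Icc a (a + 1 + n) := ⟨by linarith, by push_cast at hxn; linarith⟩
    have hpos : 0 < x := by linarith
    calc Gamma (x + 1) = x * Gamma (x - 1 + 1) := by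
          rw [sub_add_cancel, Gamma_add_one hpos.ne']
      _ ≤ x * g (x - 1) := by gcongr; exact ih _ hx'
      _ ≤ g x := by simpa using hstep (x - 1) hx'.1

theorem Gamma_add_one_le_of_two_le {x : ℝ} (hx : 2 ≤ x) :
    Gamma (x + 1) ≤ 9 / 4 * (x / 2) ^ x := by
  refine Gamma_add_one_le_of_forall_Icc (g := fun x ↦ 9 / 4 * (x / 2) ^ x) (a := 2) (by norm_num)
    (fun x ⟨hx₂, hx₃⟩ ↦ ?_) (fun x hx ↦ ?_) hx
  · have he : 8 / 3 < exp 1 := by linarith [exp_one_gt_d9]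
    have h3e : 1 ≤ 3 / exp 1 := by rw [le_div_iff₀ (exp_pos 1)]; linarith [exp_one_lt_d9]
    calc Gamma (x + 1) = Gamma (3 + (x - 2)) := by ring_nf
      _ ≤ 3 ^ (x - 2) * Gamma 3 :=
        Gamma_add_le_rpow_mul_Gamma (by norm_num) (by linarith) (by linarith)
      _ = 2 * (3 / exp 1) ^ (x - 2) * exp (x - 2) := by
        have hΓ₃ : Gamma 3 = 2 := by norm_num [Nat.factorial]
        rw [div_rpow (by norm_num) (exp_pos 1).le, exp_one_rpow, hΓ₃]
        field_simp
      _ ≤ 2 * (3 / exp 1) * exp (x - 2) := by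
        gcongr; exact rpow_le_self_of_one_le h3e (by linarith)
      _ ≤ 9 / 4 * (x / 2) ^ x := by
        gcongr
        · rw [mul_div_assoc', div_le_iff₀ (exp_pos 1)]; linarith
        · exact exp_sub_le_div_rpow_self (by norm_num) (by linarith)
  · simpa [mul_left_comm (x + 1)] using add_one_mul_half_rpow_self_le (by linarith : (1:ℝ) ≤ x)

end Real

theorem rpow_mul_Gamma_add_two_mul_rpow_lt_one {t : ℝ} (ht : 1 ≤ t) :
    (4 / (exp 1 * (t + 1))) ^ (t + 1) * Gamma (t + 2) * (2 / exp 1) ^ t < 1 := by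
  have he := exp_pos 1
  have h2e : 2 / exp 1 < 1 := by rw [div_lt_one he]; linarith [exp_one_gt_d9]
  calc (4 / (exp 1 * (t + 1))) ^ (t + 1) * Gamma (t + 2) * (2 / exp 1) ^ t
      ≤ (4 / (exp 1 * (t + 1))) ^ (t + 1) * (9 / 4 * ((t + 1) / 2) ^ (t + 1)) *
          (2 / exp 1) ^ t := by
        gcongr
        simpa [add_assoc, one_add_one_eq_two] using
          Gamma_add_one_le_of_two_le (by linarith : 2 ≤ t + 1)
    _ = 9 / 4 * (4 / (exp 1 * (t + 1)) * ((t + 1) / 2)) ^ (t + 1) * (2 / exp 1) ^ t := by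
        rw [mul_rpow (by positivity) (by positivity)]; ring
    _ = 9 / 4 * (2 / exp 1) ^ (2 * t + 1) := by
        rw [show 4 / (exp 1 * (t + 1)) * ((t + 1) / 2) = 2 / exp 1 by field_simp; ring,
          mul_assoc, ← rpow_add (by positivity)]
        ring_nf
    _ ≤ 9 / 4 * (2 / exp 1) ^ (3 : ℝ) := by
        gcongr 9 / 4 * ?_
        exact rpow_le_rpow_of_exponent_ge (by positivity) h2e.le (by linarith)
    _ < 1 := by
        have : 18 < exp 1 ^ 3 := calc
          (18 : ℝ) < 2.7 ^ 3 := by norm_num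
          _ < exp 1 ^ 3 := by gcongr; linarith [exp_one_gt_d9]
        rw [show (3 : ℝ) = (3 : ℕ) by norm_num, rpow_natCast, div_pow, ← sub_pos]
        field_simp
        linarith

theorem f1_lt_self (t : ℝ) (ht : 1 ≤ t) :
    2 * (Real.Gamma (t + 2)) ^ (1 / (t + 1)) * (2 * t / (Real.exp 1 * (t + 1))) *
      (2 / Real.exp 1) ^ (t / (t + 1)) < t := by
  have hs : 0 < t + 1 := by linarith
  have hΓ : 0 < Gamma (t + 2) := Gamma_pos_of_pos (by linarith)
  set B := (4 / (exp 1 * (t + 1))) ^ (t + 1) * Gamma (t + 2) * (2 / exp 1) ^ t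
  have hB : 0 ≤ B := by positivity
  have hf₁ : 2 * Gamma (t + 2) ^ (1 / (t + 1)) * (2 * t / (exp 1 * (t + 1))) *
      (2 / exp 1) ^ (t / (t + 1)) = t * B ^ (1 / (t + 1)) := by
    rw [mul_rpow (by positivity) (by positivity), mul_rpow (by positivity) hΓ.le,
      ← rpow_mul (by positivity), ← rpow_mul (by positivity), mul_one_div_cancel hs.ne',
      rpow_one, mul_one_div]
    ring
  rw [hf₁]
  calc t * B ^ (1 / (t + 1)) < t * 1 := by
        gcongr
        exact rpow_lt_one hB (rpow_mul_Gamma_add_two_mul_rpow_lt_one ht) (by positivity)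
    _ = t := mul_one t
end
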